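/- The level-$\frac32$ super Macdonald polynomial $\mathcal{M}_{(3/2)} = \frac{q(1-t)}{1-qt}p_1\pi_1 + \frac{1-q}{1-qt}\pi_2$ is a simultaneous eigenvector of the operator $\mathcal{D}_2 := (q^{-1}-1)p_1\partial_{p_1} + (q^{-1}-1)\pi_1\partial_{\pi_1} + (q^{-1}-1)^2 \partial_{p_1}\pi_2\partial_{\pi_1} + (1-t)(q^{-1}-1)p_1\pi_1\partial_{\pi_2} + \tfrac12\big((1+t)(q^{-2}-1)+(1-t)(q^{-1}-1)^2\big)\pi_2\partial_{\pi_2}$ with eigenvalue $q^{-2}-1$. -/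

import Mathlib

/-! On the span of `p₁π₁` and `π₂` the operator `𝒟₂` acts by a `2 × 2` matrix, and the
coefficient vector `(q(1-t), 1-q)` of `𝓜_{(3/2)}`, scaled by any common factor, is an
eigenvector of that matrix with eigenvalue `q⁻² - 1`. -/

noncomputable section

variable {K : Type} [Field K] [CharZero K]

/-- The super-polynomial ring `K[p₁,p₂,…] ⊗ Λ[π₁,π₂,…]`, modelled by finitely supported
functions assigning to each finite set `T` of fermionic indices (the wedge monomial
`π_{t₁} ∧ ⋯ ∧ π_{t_m}`, indices increasing) a bosonic coefficient. -/
abbrev SP (K : Type) [Field K] := Finset ℕ →₀ MvPolynomial ℕ K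

/-- Multiplication by a bosonic element `f`, acting coefficientwise. -/
def fmul (f : MvPolynomial ℕ K) (v : SP K) : SP K :=
  v.sum fun T r => Finsupp.single T (f * r)

/-- A bosonic operator `A` (e.g. a differential operator in the `p`'s) acting
coefficientwise. -/
def fop (A : MvPolynomial ℕ K → MvPolynomial ℕ K) (v : SP K) : SP K :=
  v.sum fun T r => Finsupp.single T (A r)

/-- Left multiplication by the fermionic generator `π_k`:
`π_k · e_T = (-1)^{#{s∈T : s<k}} e_{T∪{k}}` for `k ∉ T`, and `0` otherwise. -/
def fermi (k : ℕ) (v : SP K) : SP K :=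
  v.sum fun T r =>
    if k ∈ T then 0
    else Finsupp.single (insert k T)
      ((-1 : MvPolynomial ℕ K) ^ ((T.filter fun j => j < k).card) * r)

/-- The odd derivation `∂_{π_k}` with `{∂_{π_k}, π_ℓ} = δ_{kℓ}`:
`∂_{π_k} e_T = (-1)^{#{s∈T : s<k}} e_{T\{k}}` for `k ∈ T`, and `0` otherwise. -/
def dfermi (k : ℕ) (v : SP K) : SP K :=
  v.sum fun T r =>
    if k ∈ T then
      Finsupp.single (T.erase k)
        ((-1 : MvPolynomial ℕ K) ^ ((T.filter fun j => j < k).card) * r)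
    else 0

end

noncomputable section

open MvPolynomial

variable {K : Type} [Field K] [CharZero K]

/-- The level-`3/2` super Macdonald polynomial
`𝓜_{(3/2)} = q(1-t)/(1-qt) · p₁π₁ + (1-q)/(1-qt) · π₂`. -/
def M32 (q t : K) : SP K :=
  Finsupp.single {1} (C (q * (1 - t) / (1 - q * t)) * X 1) +
    Finsupp.single {2} (C ((1 - q) / (1 - q * t)))

/-- The operator `𝒟₂ = (q⁻¹-1) p₁∂_{p₁} + (q⁻¹-1) π₁∂_{π₁} + (q⁻¹-1)² ∂_{p₁} π₂ ∂_{π₁}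
+ (1-t)(q⁻¹-1) p₁ π₁ ∂_{π₂} + ½((1+t)(q⁻²-1)+(1-t)(q⁻¹-1)²) π₂ ∂_{π₂}`. -/
def D2op (q t : K) (v : SP K) : SP K :=
  fmul (C (q⁻¹ - 1) * X 1) (fop (pderiv 1) v) +
    fmul (C (q⁻¹ - 1)) (fermi 1 (dfermi 1 v)) +
    fmul (C ((q⁻¹ - 1) ^ 2)) (fop (pderiv 1) (fermi 2 (dfermi 1 v))) +
    fmul (C ((1 - t) * (q⁻¹ - 1)) * X 1) (fermi 1 (dfermi 2 v)) +
    fmul (C (((1 + t) * ((q⁻¹) ^ 2 - 1) + (1 - t) * (q⁻¹ - 1) ^ 2) / 2))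
      (fermi 2 (dfermi 2 v))

end

section

open MvPolynomial

variable {K : Type} [Field K]

section SuperPolynomialOperators

variable (T : Finset ℕ) (r : MvPolynomial ℕ K) (u v : SP K)

lemma fmul_single (f : MvPolynomial ℕ K) :
    fmul f (Finsupp.single T r) = Finsupp.single T (f * r) := by
  rw [fmul, Finsupp.sum_single_index]; simp

lemma fop_single (A : MvPolynomial ℕ K → MvPolynomial ℕ K) (hA : A 0 = 0) :
    fop A (Finsupp.single T r) = Finsupp.single T (A r) := by
  rw [fop, Finsupp.sum_single_index]; simp [hA]

lemma fermi_single (k : ℕ) :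
    fermi k (Finsupp.single T r) = if k ∈ T then 0
    else Finsupp.single (insert k T)
      ((-1 : MvPolynomial ℕ K) ^ ((T.filter fun j => j < k).card) * r) := by
  rw [fermi, Finsupp.sum_single_index]; split <;> simp

lemma dfermi_single (k : ℕ) :
    dfermi k (Finsupp.single T r) = if k ∈ T then
      Finsupp.single (T.erase k)
        ((-1 : MvPolynomial ℕ K) ^ ((T.filter fun j => j < k).card) * r)
    else 0 := by
  rw [dfermi, Finsupp.sum_single_index]; split <;> simp

lemma fmul_add (f : MvPolynomial ℕ K) : fmul f (u + v) = fmul f u + fmul f v := by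
  rw [fmul, Finsupp.sum_add_index] <;> simp [mul_add, Finsupp.single_add, fmul]

lemma fop_map_add {F : Type*} [FunLike F (MvPolynomial ℕ K) (MvPolynomial ℕ K)]
    [AddMonoidHomClass F (MvPolynomial ℕ K) (MvPolynomial ℕ K)] (A : F) :
    fop A (u + v) = fop A u + fop A v := by
  rw [fop, Finsupp.sum_add_index] <;> simp [Finsupp.single_add, fop]

lemma fermi_add (k : ℕ) : fermi k (u + v) = fermi k u + fermi k v := by
  rw [fermi, Finsupp.sum_add_index]
  · rfl
  · intro a _; split <;> simp
  · intro a _ b c; split <;> simp [mul_add, Finsupp.single_add]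

lemma dfermi_add (k : ℕ) : dfermi k (u + v) = dfermi k u + dfermi k v := by
  rw [dfermi, Finsupp.sum_add_index]
  · rfl
  · intro a _; split <;> simp
  · intro a _ b c; split <;> simp [mul_add, Finsupp.single_add]

lemma fmul_zero (f : MvPolynomial ℕ K) : fmul f (0 : SP K) = 0 := by simp [fmul]

lemma fop_zero (A : MvPolynomial ℕ K → MvPolynomial ℕ K) : fop A (0 : SP K) = 0 := by simp [fop]

lemma fermi_zero (k : ℕ) : fermi k (0 : SP K) = 0 := by simp [fermi]

lemma dfermi_zero (k : ℕ) : dfermi k (0 : SP K) = 0 := by simp [dfermi]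

end SuperPolynomialOperators

section D2op

variable (q t : K)

lemma D2op_add (u v : SP K) : D2op q t (u + v) = D2op q t u + D2op q t v := by
  simp only [D2op, fmul_add, fermi_add, dfermi_add, fop_map_add]
  abel

lemma D2op_single_p1pi1 (a : K) :
    D2op q t (Finsupp.single {1} (C a * X 1)) =
      Finsupp.single {1} (C (2 * (q⁻¹ - 1) * a) * X 1) +
        Finsupp.single {2} (C ((q⁻¹ - 1) ^ 2 * a)) := by
  simp +decide only [D2op, fmul_single, fop_single _ _ _ (map_zero _),
    fermi_single, dfermi_single, fmul_zero, fermi_zero, Finset.filter_singleton,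
    Finset.erase_singleton, Finset.filter_empty, if_true, if_false, insert_empty_eq, pderiv_C_mul,
    pderiv_X_self, Finset.card_empty, pow_zero, one_mul, mul_one, add_zero]
  rw [← Finsupp.single_add]
  congr 2
  · simp only [map_mul, map_sub, map_one, map_ofNat]
    ring
  · rw [map_mul]

lemma D2op_single_pi2 (b : K) :
    D2op q t (Finsupp.single {2} (C b)) =
      Finsupp.single {1} (C ((1 - t) * (q⁻¹ - 1) * b) * X 1) +
        Finsupp.single {2}
          (C (((1 + t) * ((q⁻¹) ^ 2 - 1) + (1 - t) * (q⁻¹ - 1) ^ 2) / 2 * b)) := by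
  simp +decide only [D2op, fmul_single, fop_single _ _ _ (map_zero _),
    fermi_single, dfermi_single, fmul_zero, fop_zero, fermi_zero, Finset.filter_singleton,
    Finset.erase_singleton, Finset.filter_empty, if_true, if_false, insert_empty_eq, pderiv_C,
    Finset.card_empty, pow_zero, one_mul, Finsupp.single_zero, add_zero, zero_add]
  congr 2
  · simp only [map_mul]
    ring
  · rw [map_mul]

end D2op

section EigenRows

variable {q : K} (t s : K)

lemma eigen_row_p1pi1 (hq : q ≠ 0) :
    2 * (q⁻¹ - 1) * (q * (1 - t) / s) + (1 - t) * (q⁻¹ - 1) * ((1 - q) / s) =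
      (q⁻¹ ^ 2 - 1) * (q * (1 - t) / s) := by
  field_simp
  ring

lemma eigen_row_pi2 [NeZero (2 : K)] (hq : q ≠ 0) :
    (q⁻¹ - 1) ^ 2 * (q * (1 - t) / s) +
        ((1 + t) * (q⁻¹ ^ 2 - 1) + (1 - t) * (q⁻¹ - 1) ^ 2) / 2 * ((1 - q) / s) =
      (q⁻¹ ^ 2 - 1) * ((1 - q) / s) := by
  field_simp
  ring

end EigenRows

variable [CharZero K]

theorem D2_eigen_M32_general (q t : K) (hq : q ≠ 0) :
    D2op q t (M32 q t) = fmul (C ((q⁻¹ : K) ^ 2 - 1)) (M32 q t) := by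
  rw [M32, D2op_add, D2op_single_p1pi1, D2op_single_pi2, fmul_add, fmul_single, fmul_single,
    add_add_add_comm, ← Finsupp.single_add, ← Finsupp.single_add]
  congr 2
  · rw [← add_mul, ← map_add, ← mul_assoc, ← map_mul, eigen_row_p1pi1 t _ hq]
  · rw [← map_add, ← map_mul, eigen_row_pi2 t _ hq]

/-- `𝓜_{(3/2)}` is an eigenvector of `𝒟₂` with eigenvalue `q⁻² - 1`. -/
theorem D2_eigen_M32 (q t : K) (hq : q ≠ 0) (hqt : q * t ≠ 1) :
    D2op q t (M32 q t) = fmul (C ((q⁻¹ : K) ^ 2 - 1)) (M32 q t) :=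
  D2_eigen_M32_general q t hq

end
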